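/- arXiv:2508.11792 — 2 statements merged into one kernel-verified Lean document; each statement's English description precedes it below -/
import Mathlib

section
/- Let N be a positive integer. A function g : ℂ^N → ℂ satisfies g(i·x) = i·g(x) for all x ∈ ℂ^N if and only if there exists an odd function f : ℝ^(2N) → ℝ (i.e., f(−u) = −f(u) for all u) such that for every x ∈ ℂ^N, g(x) = f(x₁) + i·f(x₂), where x₁ = [Re(x)ᵀ, Im(x)ᵀ]ᵀ ∈ ℝ^(2N) and x₂ = [Im(x)ᵀ, −Re(x)ᵀ]ᵀ ∈ ℝ^(2N). -/
/-- Stack two vectors in `ℝ^N` into a single vector in `ℝ^(2N)`. -/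
noncomputable def stack {N : ℕ} (a b : Fin N → ℝ) : Fin (2 * N) → ℝ :=
  fun j =>
    if h : (j : ℕ) < N then a ⟨j, h⟩
    else b ⟨(j : ℕ) - N, by have := j.isLt; omega⟩

lemma stack_lo {N : ℕ} (a b : Fin N → ℝ) (n : Fin N) (h : (n : ℕ) < 2 * N) :
    stack a b ⟨n, h⟩ = a n := by
  simp [stack, n.isLt]

lemma stack_hi {N : ℕ} (a b : Fin N → ℝ) (n : Fin N) (h : (n : ℕ) + N < 2 * N) :
    stack a b ⟨(n : ℕ) + N, h⟩ = b n := by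
  simp only [stack]
  rw [dif_neg (by omega)]
  congr 1
  ext
  simp

lemma stack_neg {N : ℕ} (a b : Fin N → ℝ) :
    stack (fun n => -a n) (fun n => -b n) = -(stack a b) := by
  funext j
  simp only [stack, Pi.neg_apply]
  split <;> rfl

/-- A function `g : ℂ^N → ℂ` satisfies `g(i·x) = i·g(x)` for all `x` if and only if
there exists an odd function `f : ℝ^(2N) → ℝ` such that for every `x`,
`g(x) = f(x₁) + i·f(x₂)`, with `x₁ = [Re(x)ᵀ, Im(x)ᵀ]ᵀ` and `x₂ = [Im(x)ᵀ, −Re(x)ᵀ]ᵀ`. -/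
theorem stmt0 (N : ℕ) (hN : 0 < N) (g : (Fin N → ℂ) → ℂ) :
    (∀ x : Fin N → ℂ, g (fun n => Complex.I * x n) = Complex.I * g x) ↔
      ∃ f : (Fin (2 * N) → ℝ) → ℝ,
        (∀ u : Fin (2 * N) → ℝ, f (-u) = -f u) ∧
        (∀ x : Fin N → ℂ,
          g x = (f (stack (fun n => (x n).re) (fun n => (x n).im)) : ℂ) +
            Complex.I * (f (stack (fun n => (x n).im) (fun n => -(x n).re)) : ℂ)) := by
  constructor
  · intro hg
    have hneg : ∀ x : Fin N → ℂ, g (fun n => -(x n)) = -g x := by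
      intro x
      have h2 := hg (fun n => Complex.I * x n)
      have heq : (fun n => Complex.I * (Complex.I * x n)) = fun n => -(x n) := by
        funext n
        rw [← mul_assoc, Complex.I_mul_I]
        ring
      rw [heq, hg x] at h2
      rw [h2, ← mul_assoc, Complex.I_mul_I]
      ring
    -- define f
    refine ⟨fun u => (g (fun n => Complex.mk (u ⟨n, by have := n.isLt; omega⟩)
        (u ⟨(n : ℕ) + N, by have := n.isLt; omega⟩))).re, ?_, ?_⟩
    · intro u
      have heq : (fun n : Fin N => Complex.mk ((-u) ⟨n, by have := n.isLt; omega⟩)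
            ((-u) ⟨(n : ℕ) + N, by have := n.isLt; omega⟩)) =
          fun n : Fin N => -(Complex.mk (u ⟨n, by have := n.isLt; omega⟩)
            (u ⟨(n : ℕ) + N, by have := n.isLt; omega⟩)) := by
        funext n
        apply Complex.ext <;> simp
      beta_reduce
      rw [heq, hneg]
      simp
    · intro x
      have h1 : (fun n : Fin N => Complex.mk
            ((stack (fun n => (x n).re) (fun n => (x n).im)) ⟨n, by have := n.isLt; omega⟩)
            ((stack (fun n => (x n).re) (fun n => (x n).im)) ⟨(n : ℕ) + N, by have := n.isLt; omega⟩)) = x := by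
        funext n
        rw [stack_lo, stack_hi]
      have h2 : (fun n : Fin N => Complex.mk
            ((stack (fun n => (x n).im) (fun n => -(x n).re)) ⟨n, by have := n.isLt; omega⟩)
            ((stack (fun n => (x n).im) (fun n => -(x n).re)) ⟨(n : ℕ) + N, by have := n.isLt; omega⟩)) =
          fun n => Complex.I * (-(x n)) := by
        funext n
        rw [stack_lo, stack_hi]
        apply Complex.ext <;> simp
      beta_reduce
      simp only [h1, h2]
      rw [hg, hneg]
      apply Complex.ext <;> simp
  · rintro ⟨f, hodd, hrep⟩ x
    have h1 := hrep x
    have h2 := hrep (fun n => Complex.I * x n)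
    have e1 : (fun n => (Complex.I * x n).re) = fun n : Fin N => -(x n).im := by
      funext n; simp
    have e2 : (fun n => (Complex.I * x n).im) = fun n : Fin N => (x n).re := by
      funext n; simp
    have e3 : (fun n => -(Complex.I * x n).re) = fun n : Fin N => (x n).im := by
      funext n; simp
    rw [e1, e2, e3] at h2
    have e4 : stack (fun n : Fin N => -(x n).im) (fun n => (x n).re) =
        -(stack (fun n => (x n).im) (fun n => -(x n).re)) := by
      rw [← stack_neg]
      simp
    rw [e4, hodd] at h2
    rw [h2, h1]
    push_cast
    ring_nf
    rw [Complex.I_sq]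
    ring
end

section
/- Let H be a real Hilbert space, K a positive integer, and λ > 0. Consider the product space H_C = H × ℝ^K equipped with the inner product ⟨(f, u), (g, v)⟩_{H_C} := λ⟨f, g⟩_H + uᵀv, which makes H_C a real Hilbert space. Let φ₁, …, φ_K ∈ H, let x ∈ ℝ^K, let G ∈ ℝ^(K×K) be the Gram matrix with G_{ij} = ⟨φ_i, φ_j⟩_H, and set β = (G + λI)⁻¹ x. Define b_i = (φ_i, −λe_i) ∈ H_C, where e_i ∈ ℝ^K is the i-th standard unit vector, and let M = span{b₁, …, b_K} ⊆ H_C. Then the orthogonal projection of the point (0, x) ∈ H_C onto the orthogonal complement M⊥ equals (Σ_{i=1}^K β_i φ_i, x − λβ). -/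
open scoped RealInnerProductSpace
open Matrix

/-- The inner product `⟨(f, u), (g, v)⟩_{H_C} = λ⟨f, g⟩_H + uᵀv` on the product space
`H_C = H × ℝ^K`, which makes `H_C` a real Hilbert space. -/
noncomputable def innerHC {H : Type*} [NormedAddCommGroup H] [InnerProductSpace ℝ H]
    {K : ℕ} (lam : ℝ) (p q : H × (Fin K → ℝ)) : ℝ :=
  lam * ⟪p.1, q.1⟫ + ∑ i : Fin K, p.2 i * q.2 i

lemma gram_quad_nonneg {H : Type*} [NormedAddCommGroup H] [InnerProductSpace ℝ H]
    {K : ℕ} (φ : Fin K → H) (v : Fin K → ℝ) :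
    0 ≤ ∑ i : Fin K, v i * ∑ j : Fin K, ⟪φ i, φ j⟫ * v j := by
  have : ∑ i : Fin K, v i * ∑ j : Fin K, ⟪φ i, φ j⟫ * v j
      = ⟪∑ i : Fin K, v i • φ i, ∑ j : Fin K, v j • φ j⟫ := by
    rw [sum_inner]
    refine Finset.sum_congr rfl fun i _ => ?_
    rw [real_inner_smul_left, inner_sum]
    congr 1
    refine Finset.sum_congr rfl fun j _ => ?_
    rw [real_inner_smul_right]; ring
  rw [this]
  exact real_inner_self_nonneg

/-- In the Hilbert space `H_C = H × ℝ^K` with inner product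
`⟨(f, u), (g, v)⟩_{H_C} = λ⟨f, g⟩_H + uᵀv`, with `b_i = (φ_i, −λe_i)`,
`M = span{b₁, …, b_K}` and `β = (G + λI)⁻¹x`, the orthogonal projection of `(0, x)`
onto `M⊥` equals `P = (Σ_i β_i φ_i, x − λβ)`; equivalently (since `M` is a closed
subspace), `P` is orthogonal to `M` and `(0, x) − P ∈ M`. -/
theorem stmt10 {H : Type*} [NormedAddCommGroup H] [InnerProductSpace ℝ H] [CompleteSpace H]
    (K : ℕ) (hK : 0 < K) (lam : ℝ) (hlam : 0 < lam)
    (φ : Fin K → H) (x : Fin K → ℝ)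
    (G : Matrix (Fin K) (Fin K) ℝ) (hG : ∀ i j, G i j = ⟪φ i, φ j⟫)
    (β : Fin K → ℝ) (hβ : β = (G + lam • (1 : Matrix (Fin K) (Fin K) ℝ))⁻¹ *ᵥ x)
    (b : Fin K → H × (Fin K → ℝ))
    (hb : ∀ i, b i = (φ i, fun j => if j = i then -lam else 0))
    (P : H × (Fin K → ℝ)) (hP : P = (∑ i : Fin K, β i • φ i, x - lam • β)) :
    (∀ w ∈ Submodule.span ℝ (Set.range b), innerHC lam w P = 0) ∧
    ((0, x) - P ∈ Submodule.span ℝ (Set.range b)) := by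
  set A : Matrix (Fin K) (Fin K) ℝ := G + lam • (1 : Matrix (Fin K) (Fin K) ℝ) with hA
  have hrow : ∀ v : Fin K → ℝ, ∀ i, (A *ᵥ v) i = (∑ j : Fin K, ⟪φ i, φ j⟫ * v j) + lam * v i := by
    intro v i
    simp only [mulVec, dotProduct, hA, Matrix.add_apply, Matrix.smul_apply, one_apply, smul_eq_mul]
    rw [Finset.sum_congr rfl (fun j _ => by rw [hG, add_mul]),
      Finset.sum_add_distrib]
    congr 1
    rw [Finset.sum_eq_single i]
    · simp
    · intro j _ hj; simp [hj, Ne.symm hj]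
    · simp
  -- A is positive definite
  have hApd : A.PosDef := by
    refine Matrix.PosDef.of_dotProduct_mulVec_pos ?_ ?_
    · ext i j
      simp only [conjTranspose_apply, star_trivial, hA, Matrix.add_apply, Matrix.smul_apply,
        Matrix.one_apply, hG]
      by_cases h : i = j
      · simp [h]
      · simp [h, Ne.symm h, real_inner_comm]
    · intro v hv
      have h1 : dotProduct (star v) (A *ᵥ v)
          = (∑ i : Fin K, v i * ∑ j : Fin K, ⟪φ i, φ j⟫ * v j) + lam * ∑ i : Fin K, v i * v i := by
        simp only [dotProduct, star_trivial]
        rw [Finset.sum_congr rfl (fun i _ => by rw [hrow v i, mul_add]),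
          Finset.sum_add_distrib, Finset.mul_sum]
        congr 1
        exact Finset.sum_congr rfl fun i _ => by ring
      rw [h1]
      have h2 : 0 < ∑ i : Fin K, v i * v i := by
        obtain ⟨i, hi⟩ := Function.ne_iff.mp hv
        exact Finset.sum_pos' (fun j _ => mul_self_nonneg _)
          ⟨i, Finset.mem_univ i, mul_self_pos.mpr hi⟩
      have := gram_quad_nonneg φ v
      nlinarith
  have hdet : IsUnit A.det := hApd.det_pos.ne'.isUnit
  have hAβ : A *ᵥ β = x := by
    rw [hβ, mulVec_mulVec, Matrix.mul_nonsing_inv A hdet, one_mulVec]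
  have hxi : ∀ i, x i = (∑ j : Fin K, ⟪φ i, φ j⟫ * β j) + lam * β i := by
    intro i
    rw [← hAβ, hrow β i]
  -- orthogonality on basis vectors
  have hbase : ∀ i, innerHC lam (b i) P = 0 := by
    intro i
    rw [hb, hP]
    simp only [innerHC]
    have hin : ⟪φ i, ∑ j : Fin K, β j • φ j⟫ = ∑ j : Fin K, ⟪φ i, φ j⟫ * β j := by
      rw [inner_sum]
      exact Finset.sum_congr rfl fun j _ => by rw [real_inner_smul_right]; ring
    have hsum : ∑ j : Fin K, (if j = i then -lam else 0) * (x - lam • β) j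
        = -lam * (x i - lam * β i) := by
      rw [Finset.sum_eq_single i]
      · simp
      · intro j _ hj; simp [hj]
      · simp
    rw [hin, hsum, hxi i]
    ring
  constructor
  · intro w hw
    induction hw using Submodule.span_induction with
    | mem w hw =>
      obtain ⟨i, rfl⟩ := hw
      exact hbase i
    | zero => simp [innerHC]
    | add u v _ _ hu hv =>
      have : innerHC lam (u + v) P = innerHC lam u P + innerHC lam v P := by
        simp only [innerHC, Prod.fst_add, Prod.snd_add, inner_add_left, Pi.add_apply]
        rw [Finset.sum_congr rfl fun i _ => add_mul (u.2 i) (v.2 i) (P.2 i),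
          Finset.sum_add_distrib]
        ring
      rw [this, hu, hv, add_zero]
    | smul c u _ hu =>
      have : innerHC lam (c • u) P = c * innerHC lam u P := by
        simp only [innerHC, Prod.smul_fst, Prod.smul_snd, real_inner_smul_left, Pi.smul_apply,
          smul_eq_mul]
        rw [Finset.sum_congr rfl fun i _ => mul_assoc c (u.2 i) (P.2 i), ← Finset.mul_sum]
        ring
      rw [this, hu, mul_zero]
  · have key : (0, x) - P = ∑ i : Fin K, (-β i) • b i := by
      rw [hP]
      ext
      · simp only [Prod.fst_sub, Prod.snd_sub]
        rw [Prod.fst_sum]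
        simp [hb, neg_smul]
      · simp only [Prod.snd_sub, Pi.sub_apply, Pi.smul_apply, smul_eq_mul]
        rw [Prod.snd_sum]
        rename_i j
        simp only [Finset.sum_apply, hb, Pi.smul_apply, smul_eq_mul]
        rw [Finset.sum_eq_single j]
        · simp; ring
        · intro i _ hi; simp [Ne.symm hi]
        · simp
    rw [key]
    exact Submodule.sum_mem _ fun i _ =>
      Submodule.smul_mem _ _ (Submodule.subset_span (Set.mem_range_self i))
end
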